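/- Fix real constants c₁ and c₂ and let I be an open interval on which cos(√3·(c₁ + t)) ≠ 0. Define H(t) := −√3·tan(√3·(c₁ + t)) and σ(t) := c₂/cos(√3·(c₁ + t)) + (1/√3)·tan(√3·(c₁ + t)) on I. Then H'(t) = −3 − H(t)² and σ'(t) = 1 − H(t)·σ(t) for all t ∈ I. Moreover, the constraint identity 1 + (5/16)·H(t)² − (3/16)·σ(t)² − (1/8)·H(t)σ(t) = 0 holds for all t ∈ I if and only if 3·c₂² = 16, i.e. c₂ = ±4/√3. -/

import Mathlib

open Real Set

/-!
With `u = ω (c₁ + t)`, the derivatives `tan' = ω (1 + tan² u)` and `(1 / cos u)' = ω tan u / cos u`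
turn both equations into the identity `1 + tan² u = 1 / cos² u`. For `ω = √3` the cross terms
of the constraint cancel and it reduces to `(1 - 3 c₂² / 16) / cos² u`, so it vanishes at one
point of the interval exactly when it vanishes at all of them.
-/

theorem hasDerivAt_mul_add (ω c t : ℝ) : HasDerivAt (fun t => ω * (c + t)) ω t := by
  simpa using ((hasDerivAt_id t).const_add c).const_mul ω

section AffineTrig

variable {ω c t : ℝ}

theorem hasDerivAt_tan_mul_add (h : cos (ω * (c + t)) ≠ 0) :
    HasDerivAt (fun t => tan (ω * (c + t))) (ω * (1 + tan (ω * (c + t)) ^ 2)) t := by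
  refine ((hasDerivAt_tan h).comp t (hasDerivAt_mul_add ω c t)).congr_deriv ?_
  rw [← inv_one_add_tan_sq h, one_div, inv_inv, mul_comm]

theorem hasDerivAt_div_cos_mul_add (k : ℝ) (h : cos (ω * (c + t)) ≠ 0) :
    HasDerivAt (fun t => k / cos (ω * (c + t)))
      (ω * tan (ω * (c + t)) * (k / cos (ω * (c + t)))) t := by
  refine ((hasDerivAt_const t k).div
    ((hasDerivAt_cos _).comp t (hasDerivAt_mul_add ω c t)) h).congr_deriv ?_
  rw [tan_eq_sin_div_cos]
  simp only [Function.comp_apply]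
  field_simp
  ring

end AffineTrig

namespace BianchiI

noncomputable def hubble (ω c₁ t : ℝ) : ℝ := -ω * tan (ω * (c₁ + t))

noncomputable def shear (ω c₁ c₂ t : ℝ) : ℝ := c₂ / cos (ω * (c₁ + t)) + 1 / ω * tan (ω * (c₁ + t))

variable {ω c₁ c₂ t : ℝ}

theorem hasDerivAt_hubble (h : cos (ω * (c₁ + t)) ≠ 0) :
    HasDerivAt (hubble ω c₁) (-ω ^ 2 - hubble ω c₁ t ^ 2) t :=
  ((hasDerivAt_tan_mul_add h).const_mul (-ω)).congr_deriv (by unfold hubble; ring)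

theorem hasDerivAt_shear (hω : ω ≠ 0) (h : cos (ω * (c₁ + t)) ≠ 0) :
    HasDerivAt (shear ω c₁ c₂) (1 - hubble ω c₁ t * shear ω c₁ c₂ t) t := by
  refine ((hasDerivAt_div_cos_mul_add c₂ h).add
    ((hasDerivAt_tan_mul_add h).const_mul (1 / ω))).congr_deriv ?_
  unfold hubble shear
  field_simp
  ring

theorem constraint_eq (h : cos (√3 * (c₁ + t)) ≠ 0) :
    1 + 5 / 16 * hubble √3 c₁ t ^ 2 - 3 / 16 * shear √3 c₁ c₂ t ^ 2
        - 1 / 8 * (hubble √3 c₁ t * shear √3 c₁ c₂ t)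
      = (16 - 3 * c₂ ^ 2) / (16 * cos (√3 * (c₁ + t)) ^ 2) := by
  unfold hubble shear
  set x := √3 * (c₁ + t)
  have h3 : √3 ^ 2 = 3 := sq_sqrt (by norm_num)
  have hinv : 1 / √3 = √3 / 3 := by field_simp; exact h3.symm
  have hsec : 1 + tan x ^ 2 = 1 / cos x ^ 2 := by rw [← inv_one_add_tan_sq h, one_div, inv_inv]
  calc _ = 1 + tan x ^ 2 - 3 / 16 * (c₂ / cos x) ^ 2 := by
        rw [hinv]; linear_combination (tan x ^ 2 / 3) * h3
    _ = _ := by rw [hsec]; field_simp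

theorem constraint_eq_zero_iff (h : cos (√3 * (c₁ + t)) ≠ 0) :
    1 + 5 / 16 * hubble √3 c₁ t ^ 2 - 3 / 16 * shear √3 c₁ c₂ t ^ 2
        - 1 / 8 * (hubble √3 c₁ t * shear √3 c₁ c₂ t) = 0 ↔ 3 * c₂ ^ 2 = 16 := by
  rw [constraint_eq h, div_eq_zero_iff, or_iff_left (by positivity), sub_eq_zero, eq_comm]

end BianchiI

theorem three_mul_sq_eq_sixteen_iff {c : ℝ} : 3 * c ^ 2 = 16 ↔ c = 4 / √3 ∨ c = -(4 / √3) := by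
  rw [← sq_eq_sq_iff_eq_or_eq_neg, div_pow, sq_sqrt (by norm_num)]
  constructor <;> intro h <;> linarith

open BianchiI in
theorem bianchi_I_explicit_solution (c₁ c₂ a b : ℝ) (hab : a < b)
    (hcos : ∀ t ∈ Set.Ioo a b, Real.cos (Real.sqrt 3 * (c₁ + t)) ≠ 0)
    (H σ : ℝ → ℝ)
    (hH : H = fun t => -Real.sqrt 3 * Real.tan (Real.sqrt 3 * (c₁ + t)))
    (hσ : σ = fun t => c₂ / Real.cos (Real.sqrt 3 * (c₁ + t))
      + (1 / Real.sqrt 3) * Real.tan (Real.sqrt 3 * (c₁ + t))) :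
    (∀ t ∈ Set.Ioo a b, HasDerivAt H (-3 - (H t) ^ 2) t) ∧
    (∀ t ∈ Set.Ioo a b, HasDerivAt σ (1 - H t * σ t) t) ∧
    ((∀ t ∈ Set.Ioo a b,
        1 + (5 / 16) * (H t) ^ 2 - (3 / 16) * (σ t) ^ 2 - (1 / 8) * (H t * σ t) = 0)
      ↔ 3 * c₂ ^ 2 = 16) ∧
    (3 * c₂ ^ 2 = 16 ↔ (c₂ = 4 / Real.sqrt 3 ∨ c₂ = -(4 / Real.sqrt 3))) := by
  obtain rfl : H = hubble √3 c₁ := hH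
  obtain rfl : σ = shear √3 c₁ c₂ := hσ
  obtain ⟨m, hm⟩ := nonempty_Ioo.2 hab
  refine ⟨fun t ht => ?_, fun t ht => hasDerivAt_shear (by positivity) (hcos t ht),
    ⟨fun h => (constraint_eq_zero_iff (hcos m hm)).1 (h m hm),
      fun h t ht => (constraint_eq_zero_iff (hcos t ht)).2 h⟩,
    three_mul_sq_eq_sixteen_iff⟩
  exact (hasDerivAt_hubble (hcos t ht)).congr_deriv (by rw [sq_sqrt (by norm_num)])
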